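/- arXiv:2003.02129 — 4 statements merged into one kernel-verified Lean document; each statement's English description precedes it below -/
import Mathlib

section
/- Let X, Y, Z be Banach spaces, let T : X → Y be a continuous linear map, and let K : X → Z be a compact linear operator. Suppose there is a constant C > 0 such that ‖x‖_X ≤ C (‖T x‖_Y + ‖K x‖_Z) for all x ∈ X. Then the kernel of T is finite-dimensional and the range of T is closed in Y; that is, T is semi-Fredholm. -/
/-!
The estimate says that `x ↦ (T x, K x)` is bounded below, hence a closed embedding of `X`.
A closed bounded set whose `T`-image lies in a compact set is therefore homeomorphic to a closed
subset of a compact product (the `K`-image of a bounded set is relatively compact), so it is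
compact. For the unit ball of `ker T` this gives finite dimension by Riesz's theorem. On a closed
complement of `ker T` it shows that `T` is bounded below, since a normalized sequence along which
`T` tends to `0` would have a limit point of norm one in the kernel; hence the range is closed.
-/

open Metric Set Filter Topology
open scoped NNReal

section NontriviallyNormedField

variable {𝕜 X Y Z : Type*} [NontriviallyNormedField 𝕜]
  [NormedAddCommGroup X] [NormedSpace 𝕜 X] [NormedAddCommGroup Y] [NormedSpace 𝕜 Y]
  [NormedAddCommGroup Z] [NormedSpace 𝕜 Z] (T : X →L[𝕜] Y) (K : X →L[𝕜] Z) {C : ℝ}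

theorem antilipschitzWith_prod_of_norm_le_mul_add (hC : 0 ≤ C)
    (hest : ∀ x, ‖x‖ ≤ C * (‖T x‖ + ‖K x‖)) :
    AntilipschitzWith (2 * C).toNNReal (T.prod K) := by
  refine (T.prod K).antilipschitz_of_bound fun x => ?_
  calc ‖x‖ ≤ C * (‖T x‖ + ‖K x‖) := hest x
    _ ≤ C * (2 * ‖(T x, K x)‖) := by
        gcongr
        rw [Prod.norm_def, two_mul]
        exact add_le_add (le_max_left _ _) (le_max_right _ _)
    _ = (2 * C).toNNReal * ‖T.prod K x‖ := by
        rw [Real.coe_toNNReal _ (by positivity), T.prod_apply]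
        ring

theorem isCompact_of_mapsTo_of_norm_le_mul_add [CompleteSpace X] (hK : IsCompactOperator K)
    (hC : 0 ≤ C) (hest : ∀ x, ‖x‖ ≤ C * (‖T x‖ + ‖K x‖)) {s : Set X} {t : Set Y}
    (hs : IsClosed s) (hs_bdd : Bornology.IsBounded s) (ht : IsCompact t) (hst : MapsTo T s t) :
    IsCompact s := by
  obtain ⟨k, hk, hKs⟩ := hK.image_subset_compact_of_bounded hs_bdd
  have hL : IsClosedEmbedding (T.prod K) :=
    (antilipschitzWith_prod_of_norm_le_mul_add T K hC hest).isClosedEmbedding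
      (T.prod K).uniformContinuous
  rw [hL.isCompact_iff]
  refine (ht.prod hk).of_isClosed_subset (hL.isClosedMap s hs) ?_
  rintro _ ⟨x, hx, rfl⟩
  exact ⟨hst hx, hKs (mem_image_of_mem K hx)⟩

theorem finiteDimensional_ker_of_norm_le_mul_add [CompleteSpace 𝕜] [CompleteSpace X]
    (hK : IsCompactOperator K) (hC : 0 ≤ C)
    (hest : ∀ x, ‖x‖ ≤ C * (‖T x‖ + ‖K x‖)) :
    FiniteDimensional 𝕜 (LinearMap.ker (T : X →ₗ[𝕜] Y)) := by
  refine .of_isCompact_closedBall₀ 𝕜 one_pos ?_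
  rw [Subtype.isCompact_iff, Subtype.image_closedBall]
  exact isCompact_of_mapsTo_of_norm_le_mul_add T K hK hC hest (t := {0})
    (isClosed_closedBall.inter T.isClosed_ker) (isBounded_closedBall.subset inter_subset_left)
    isCompact_singleton fun _ hx => hx.2

end NontriviallyNormedField

section RCLike

variable {𝕜 X Y Z : Type*} [RCLike 𝕜]
  [NormedAddCommGroup X] [NormedSpace 𝕜 X] [NormedAddCommGroup Y] [NormedSpace 𝕜 Y]
  [NormedAddCommGroup Z] [NormedSpace 𝕜 Z] (T : X →L[𝕜] Y) (K : X →L[𝕜] Z) {C : ℝ}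

theorem exists_norm_le_mul_norm_of_disjoint_ker [CompleteSpace X] (hK : IsCompactOperator K)
    (hC : 0 ≤ C) (hest : ∀ x, ‖x‖ ≤ C * (‖T x‖ + ‖K x‖)) {M : Submodule 𝕜 X}
    (hM : IsClosed (M : Set X)) (hMT : Disjoint M (LinearMap.ker (T : X →ₗ[𝕜] Y))) :
    ∃ c : ℝ≥0, ∀ x ∈ M, ‖x‖ ≤ c * ‖T x‖ := by
  by_contra! h
  choose x hxM hx using fun n : ℕ => h (n + 1)
  have hx₀ (n : ℕ) : x n ≠ 0 := fun h0 => by simpa [h0] using hx n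
  set u : ℕ → X := fun n => (‖x n‖⁻¹ : 𝕜) • x n
  have hu_norm (n : ℕ) : ‖u n‖ = 1 := norm_smul_inv_norm (hx₀ n)
  have hTu_le (n : ℕ) : ‖T (u n)‖ ≤ 1 / (n + 1) := by
    have hxn := hx n
    push_cast at hxn
    calc ‖T (u n)‖ = ‖T (x n)‖ / ‖x n‖ := by simp [u, norm_smul, div_eq_inv_mul]
      _ ≤ 1 / (n + 1) := by
        rw [div_le_div_iff₀ (norm_pos_iff.2 (hx₀ n)) (by positivity)]
        linarith
  have hTu : Tendsto (T ∘ u) atTop (𝓝 0) := by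
    rw [tendsto_zero_iff_norm_tendsto_zero]
    exact squeeze_zero (fun _ => norm_nonneg _) hTu_le tendsto_one_div_add_atTop_nhds_zero_nat
  have ht := hTu.isCompact_insert_range
  have hs_compact : IsCompact (sphere 0 1 ∩ M ∩ T ⁻¹' insert 0 (range (T ∘ u))) :=
    isCompact_of_mapsTo_of_norm_le_mul_add T K hK hC hest
      ((isClosed_sphere.inter hM).inter (ht.isClosed.preimage T.continuous))
      (isBounded_sphere.subset (inter_subset_left.trans inter_subset_left)) ht fun _ hx => hx.2
  obtain ⟨a, ⟨⟨ha_sphere, haM⟩, -⟩, φ, hφ, hua⟩ := hs_compact.tendsto_subseq fun n =>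
    ⟨⟨mem_sphere_zero_iff_norm.2 (hu_norm n), M.smul_mem _ (hxM n)⟩,
      subset_insert _ _ (mem_range_self n)⟩
  have hTa : T a = 0 :=
    tendsto_nhds_unique ((T.continuous.tendsto a).comp hua) (hTu.comp hφ.tendsto_atTop)
  have : a = 0 := (Submodule.disjoint_def.1 hMT) a haM hTa
  simp [this] at ha_sphere

theorem isClosed_range_of_norm_le_mul_add [CompleteSpace X] (hK : IsCompactOperator K)
    (hC : 0 ≤ C) (hest : ∀ x, ‖x‖ ≤ C * (‖T x‖ + ‖K x‖)) :
    IsClosed (range T) := by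
  have := finiteDimensional_ker_of_norm_le_mul_add T K hK hC hest
  obtain ⟨M, hM, hcompl⟩ :=
    (Submodule.ClosedComplemented.of_finiteDimensional
      (LinearMap.ker (T : X →ₗ[𝕜] Y))).exists_isClosed_isCompl
  obtain ⟨c, hc⟩ :=
    exists_norm_le_mul_norm_of_disjoint_ker T K hK hC hest hM hcompl.disjoint.symm
  have : CompleteSpace M := hM.completeSpace_coe
  have hrange : range (T.comp M.subtypeL) = range T := by
    refine (range_comp_subset_range M.subtypeL T).antisymm ?_
    rintro _ ⟨x, rfl⟩
    obtain ⟨k, m, hk, hm, rfl⟩ := Submodule.codisjoint_iff_exists_add_eq.1 hcompl.codisjoint x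
    exact ⟨⟨m, hm⟩, by simpa using hk⟩
  rw [← hrange]
  exact ((T.comp M.subtypeL).antilipschitz_of_bound fun x => hc x x.2).isClosed_range
    (T.comp M.subtypeL).uniformContinuous

end RCLike

theorem semiFredholm_of_estimate_with_compact_general
    {X Y Z : Type*} [NormedAddCommGroup X] [NormedSpace ℝ X] [CompleteSpace X]
    [NormedAddCommGroup Y] [NormedSpace ℝ Y]
    [NormedAddCommGroup Z] [NormedSpace ℝ Z]
    (T : X →L[ℝ] Y) (K : X →L[ℝ] Z) (hK : IsCompactOperator K)
    (C : ℝ) (hC : 0 < C) (hest : ∀ x : X, ‖x‖ ≤ C * (‖T x‖ + ‖K x‖)) :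
    FiniteDimensional ℝ (LinearMap.ker (T : X →ₗ[ℝ] Y)) ∧ IsClosed (LinearMap.range (T : X →ₗ[ℝ] Y) : Set Y) :=
  ⟨finiteDimensional_ker_of_norm_le_mul_add T K hK hC.le hest,
    isClosed_range_of_norm_le_mul_add T K hK hC.le hest⟩

theorem semiFredholm_of_estimate_with_compact
    {X Y Z : Type*} [NormedAddCommGroup X] [NormedSpace ℝ X] [CompleteSpace X]
    [NormedAddCommGroup Y] [NormedSpace ℝ Y] [CompleteSpace Y]
    [NormedAddCommGroup Z] [NormedSpace ℝ Z] [CompleteSpace Z]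
    (T : X →L[ℝ] Y) (K : X →L[ℝ] Z) (hK : IsCompactOperator K)
    (C : ℝ) (hC : 0 < C) (hest : ∀ x : X, ‖x‖ ≤ C * (‖T x‖ + ‖K x‖)) :
    FiniteDimensional ℝ (LinearMap.ker (T : X →ₗ[ℝ] Y)) ∧ IsClosed (LinearMap.range (T : X →ₗ[ℝ] Y) : Set Y) :=
  semiFredholm_of_estimate_with_compact_general T K hK C hC hest
end

section
/- Let X and Y be Banach spaces and let (T_n) be a sequence of Fredholm continuous linear maps from X to Y converging in operator norm to a continuous linear map T. If T is semi-Fredholm (its kernel is finite-dimensional and its range is closed), then T is Fredholm; that is, the cokernel Y/range(T) is also finite-dimensional. -/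
/-!
Let `X₀` be a closed complement of `ker T`; since `T` has closed range, `‖x‖ ≤ D ‖T x‖` on `X₀`.
For `S = Tn n` with `2 D ‖S - T‖ ≤ δ ≤ 1`, a functional `z` vanishing on `range T` satisfies
`|z (S x)| = |z ((S - T) x)| ≤ δ ‖z‖ ‖S x‖` on `X₀`, so by Hahn–Banach it lies within `δ ‖z‖` of the
annihilator of `S X₀`. As `S` is Fredholm, `S X₀` has finite codimension and this annihilator is
finite-dimensional. A Riesz-type compactness argument then makes the annihilator of `range T`
finite-dimensional; it contains the dual of `Y ⧸ range T`, which is therefore finite-dimensional.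
-/

variable {X Y : Type*} [NormedAddCommGroup X] [NormedSpace ℝ X] [CompleteSpace X]
  [NormedAddCommGroup Y] [NormedSpace ℝ Y] [CompleteSpace Y]

def IsFredholm (T : X →L[ℝ] Y) : Prop :=
  FiniteDimensional ℝ (LinearMap.ker (T : X →ₗ[ℝ] Y)) ∧ IsClosed (LinearMap.range (T : X →ₗ[ℝ] Y) : Set Y) ∧
    FiniteDimensional ℝ (Y ⧸ LinearMap.range (T : X →ₗ[ℝ] Y))

namespace Submodule

variable {K E : Type*} [DivisionRing K] [AddCommGroup E] [Module K E]

theorem finiteDimensional_quotient_of_sup_eq_top {M V : Submodule K E} [FiniteDimensional K V]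
    (h : M ⊔ V = ⊤) : FiniteDimensional K (E ⧸ M) := by
  refine Module.Finite.of_surjective (M.mkQ ∘ₗ V.subtype) fun q => ?_
  obtain ⟨y, rfl⟩ := M.mkQ_surjective q
  obtain ⟨m, hm, v, hv, rfl⟩ := mem_sup.mp (h ▸ mem_top : y ∈ M ⊔ V)
  exact ⟨⟨v, hv⟩, by simp [(Quotient.mk_eq_zero M).mpr hm]⟩

theorem finiteDimensional_quotient_of_le_sup {A B C : Submodule K E} [FiniteDimensional K B]
    [FiniteDimensional K (E ⧸ C)] (h : C ≤ A ⊔ B) : FiniteDimensional K (E ⧸ A) := by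
  obtain ⟨F, hF⟩ := C.exists_isCompl
  have : FiniteDimensional K F := (quotientEquivOfIsCompl C F hF).finiteDimensional
  refine finiteDimensional_quotient_of_sup_eq_top (V := B ⊔ F) (eq_top_iff.mpr ?_)
  calc ⊤ = C ⊔ F := hF.sup_eq_top.symm
    _ ≤ A ⊔ (B ⊔ F) := by rw [← sup_assoc]; exact sup_le_sup_right h F

end Submodule

theorem LinearMap.finiteDimensional_quotient_map_of_isCompl {K E F : Type*} [DivisionRing K]
    [AddCommGroup E] [Module K E] [AddCommGroup F] [Module K F] (S : E →ₗ[K] F)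
    {N X₀ : Submodule K E} (h : IsCompl N X₀) [FiniteDimensional K N]
    [FiniteDimensional K (F ⧸ range S)] : FiniteDimensional K (F ⧸ X₀.map S) :=
  Submodule.finiteDimensional_quotient_of_le_sup (B := N.map S) (C := range S) <| by
    rw [range_eq_map, ← h.symm.sup_eq_top, Submodule.map_sup]

theorem LinearMap.map_eq_range_of_isCompl {K E F : Type*} [DivisionRing K] [AddCommGroup E]
    [Module K E] [AddCommGroup F] [Module K F] {f : E →ₗ[K] F} {X₀ : Submodule K E}
    (h : IsCompl (ker f) X₀) : X₀.map f = range f := by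
  rw [range_eq_map, ← h.sup_eq_top, Submodule.map_sup]
  simp [Submodule.map_le_iff_le_comap]

theorem FiniteDimensional.of_finiteDimensional_strongDual {K V : Type*} [Field K]
    [TopologicalSpace K] [IsTopologicalRing K] [AddCommGroup V] [TopologicalSpace V] [Module K V]
    [SeparatingDual K V] [FiniteDimensional K (StrongDual K V)] : FiniteDimensional K V :=
  Module.Finite.of_injective _ (separatingDual_iff_injective.mp ‹_›)

section NormedSpace

open Metric StrongDual

variable {𝕜 E F : Type*} [RCLike 𝕜] [NormedAddCommGroup E] [NormedSpace 𝕜 E]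
  [NormedAddCommGroup F] [NormedSpace 𝕜 F]

theorem Submodule.finiteDimensional_of_forall_exists_norm_sub_le (Z : Submodule 𝕜 E)
    (h : ∀ δ > 0, ∃ W : Submodule 𝕜 E, FiniteDimensional 𝕜 W ∧
      ∀ z ∈ Z, ∃ w ∈ W, ‖z - w‖ ≤ δ * ‖z‖) :
    FiniteDimensional 𝕜 Z := by
  by_contra hZ
  obtain ⟨R, f, hR, hfR, hf⟩ := exists_seq_norm_le_one_le_norm_sub hZ
  obtain ⟨W, hW, hfW⟩ := h (1 / (4 * R)) (by positivity)
  have hclose (k : ℕ) : ∃ w : W, dist (f k : E) w ≤ 1 / 4 := by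
    obtain ⟨w, hw, hfw⟩ := hfW _ (f k).2
    refine ⟨⟨w, hw⟩, (dist_eq_norm _ _).trans_le (hfw.trans ?_)⟩
    calc 1 / (4 * R) * ‖(f k : E)‖ ≤ 1 / (4 * R) * R := by gcongr; exact hfR k
      _ = 1 / 4 := by field_simp
  choose w hw using hclose
  have hw_bdd (k : ℕ) : w k ∈ closedBall (0 : W) (R + 1) := by
    have := norm_le_norm_add_norm_sub (f k : E) (w k)
    rw [← dist_eq_norm] at this
    exact mem_closedBall_zero_iff.mpr (this.trans (add_le_add (hfR k) ((hw k).trans (by linarith))))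
  obtain ⟨_, -, φ, hφ, hlim⟩ := (isCompact_closedBall (0 : W) (R + 1)).tendsto_subseq hw_bdd
  obtain ⟨N, hN⟩ := Metric.cauchySeq_iff.mp hlim.cauchySeq (1 / 2) (by norm_num)
  have hsep : 1 ≤ dist (f (φ N)) (f (φ (N + 1))) :=
    (dist_eq_norm (f (φ N)) _).symm ▸ hf (hφ.injective.ne (Nat.lt_succ_self N).ne)
  have hwN : dist (w (φ N)) (w (φ (N + 1))) < 1 / 2 := hN N le_rfl (N + 1) N.le_succ
  rw [Subtype.dist_eq] at hsep hwN
  linarith [dist_triangle4 (f (φ N) : E) (w (φ N)) (w (φ (N + 1))) (f (φ (N + 1))), hw (φ N),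
    dist_comm (w (φ (N + 1)) : E) (f (φ (N + 1))), hw (φ (N + 1))]

theorem StrongDual.finiteDimensional_polarSubmodule (M : Submodule 𝕜 E)
    [FiniteDimensional 𝕜 (E ⧸ M)] : FiniteDimensional 𝕜 (polarSubmodule 𝕜 M) := by
  have hle : (polarSubmodule 𝕜 M).map (ContinuousLinearMap.coeLM 𝕜) ≤ M.dualAnnihilator := by
    rintro _ ⟨φ, hφ, rfl⟩
    exact (Submodule.mem_dualAnnihilator _).mpr ((mem_polarSubmodule 𝕜 M φ).mp hφ)
  have : FiniteDimensional 𝕜 M.dualAnnihilator :=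
    (Submodule.dualQuotEquivDualAnnihilator M).finiteDimensional
  have := Submodule.finiteDimensional_of_le hle
  exact Module.Finite.equiv (Submodule.equivMapOfInjective (ContinuousLinearMap.coeLM 𝕜)
    (fun _ _ h => ContinuousLinearMap.coe_injective h) (polarSubmodule 𝕜 M)).symm

theorem StrongDual.exists_mem_polarSubmodule_norm_sub_le (M : Submodule 𝕜 E) (z : StrongDual 𝕜 E)
    {c : ℝ} (hc : 0 ≤ c) (h : ∀ m ∈ M, ‖z m‖ ≤ c * ‖m‖) :
    ∃ w ∈ polarSubmodule 𝕜 M, ‖z - w‖ ≤ c := by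
  obtain ⟨ψ, hψz, hψ⟩ := exists_extension_norm_eq M (z.comp M.subtypeL)
  refine ⟨z - ψ, (mem_polarSubmodule 𝕜 M _).mpr fun m hm => ?_, ?_⟩
  · simpa [sub_eq_zero] using (hψz ⟨m, hm⟩).symm
  · rw [sub_sub_cancel, hψ]
    exact ContinuousLinearMap.opNorm_le_bound _ hc fun m => h m m.2

theorem Submodule.finiteDimensional_quotient_of_polarSubmodule (R : Submodule 𝕜 E)
    [IsClosed (R : Set E)] [FiniteDimensional 𝕜 (polarSubmodule 𝕜 R)] :
    FiniteDimensional 𝕜 (E ⧸ R) := by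
  let ι : StrongDual 𝕜 (E ⧸ R) →ₗ[𝕜] polarSubmodule 𝕜 R :=
    LinearMap.codRestrict _ ((ContinuousLinearMap.compL 𝕜 E (E ⧸ R) 𝕜).flip R.mkQL).toLinearMap
      fun φ => (mem_polarSubmodule 𝕜 R _).mpr fun m hm => by
        simp [(Quotient.mk_eq_zero R).mpr hm]
  have hι : Function.Injective ι := fun φ ψ h => by
    ext q
    obtain ⟨y, rfl⟩ := R.mkQ_surjective q
    exact congr($(congrArg Subtype.val h) y)
  have : FiniteDimensional 𝕜 (StrongDual 𝕜 (E ⧸ R)) :=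
    FiniteDimensional.of_injective (V₂ := polarSubmodule 𝕜 R) ι hι
  exact .of_finiteDimensional_strongDual

namespace ContinuousLinearMap

theorem exists_isCompl_ker_norm_le_mul [CompleteSpace E] [CompleteSpace F] (T : E →L[𝕜] F)
    [FiniteDimensional 𝕜 (T : E →ₗ[𝕜] F).ker] (hT : IsClosed ((T : E →ₗ[𝕜] F).range : Set F)) :
    ∃ X₀ : Submodule 𝕜 E, IsCompl (T : E →ₗ[𝕜] F).ker X₀ ∧
      ∃ D : ℝ, 0 ≤ D ∧ ∀ x ∈ X₀, ‖x‖ ≤ D * ‖T x‖ := by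
  obtain ⟨X₀, hX₀, hcompl⟩ :=
    (Submodule.ClosedComplemented.of_finiteDimensional (T : E →ₗ[𝕜] F).ker).exists_isClosed_isCompl
  have : CompleteSpace X₀ := hX₀.completeSpace_coe
  have hinj : Function.Injective (T ∘L X₀.subtypeL) := by
    rw [← coe_coe, injective_iff_map_eq_zero]
    intro x hx
    exact Subtype.ext (Submodule.disjoint_def.mp hcompl.disjoint x hx x.2)
  have hrange : Set.range (T ∘L X₀.subtypeL) = (T : E →ₗ[𝕜] F).range := by
    rw [← coe_coe, ← LinearMap.coe_range, show (T ∘L X₀.subtypeL : X₀ →ₗ[𝕜] F) =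
      (T : E →ₗ[𝕜] F) ∘ₗ X₀.subtype from rfl, LinearMap.range_comp, Submodule.range_subtype,
      LinearMap.map_eq_range_of_isCompl hcompl]
  obtain ⟨K, hK⟩ := (T ∘L X₀.subtypeL).antilipschitz_of_injective_of_isClosed_range hinj
    (hrange ▸ hT)
  exact ⟨X₀, hcompl, K, K.2, fun x hx => (T ∘L X₀.subtypeL).bound_of_antilipschitz hK ⟨x, hx⟩⟩

theorem norm_le_two_mul_of_norm_sub_le {S T : E →L[𝕜] F} {x : E} {D : ℝ} (hD : 0 ≤ D)
    (hT : ‖x‖ ≤ D * ‖T x‖) (hST : 2 * D * ‖S - T‖ ≤ 1) : ‖x‖ ≤ 2 * D * ‖S x‖ := by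
  have : ‖T x‖ ≤ ‖S x‖ + ‖S - T‖ * ‖x‖ := calc
    ‖T x‖ = ‖S x - (S - T) x‖ := by simp
    _ ≤ ‖S x‖ + ‖S - T‖ * ‖x‖ := (norm_sub_le _ _).trans (by gcongr; exact le_opNorm _ _)
  nlinarith [norm_nonneg x, norm_nonneg (S x)]

theorem exists_mem_polarSubmodule_map_norm_sub_le {S T : E →L[𝕜] F} {X₀ : Submodule 𝕜 E} {D : ℝ}
    (hD : 0 ≤ D) (hT : ∀ x ∈ X₀, ‖x‖ ≤ D * ‖T x‖) (hST : 2 * D * ‖S - T‖ ≤ 1)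
    {z : StrongDual 𝕜 F} (hz : z ∈ polarSubmodule 𝕜 (T : E →ₗ[𝕜] F).range) :
    ∃ w ∈ polarSubmodule 𝕜 (X₀.map (S : E →ₗ[𝕜] F)), ‖z - w‖ ≤ 2 * D * ‖S - T‖ * ‖z‖ := by
  refine exists_mem_polarSubmodule_norm_sub_le _ z (by positivity) ?_
  rintro _ ⟨x, hx, rfl⟩
  have hzT : z (T x) = 0 := (mem_polarSubmodule 𝕜 _ z).mp hz _ ⟨x, rfl⟩
  calc ‖z (S x)‖ = ‖z ((S - T) x)‖ := by simp [hzT]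
    _ ≤ ‖z‖ * (‖S - T‖ * ‖x‖) := (z.le_opNorm _).trans (by gcongr; exact le_opNorm _ _)
    _ ≤ ‖z‖ * (‖S - T‖ * (2 * D * ‖S x‖)) := by
        gcongr; exact norm_le_two_mul_of_norm_sub_le hD (hT x hx) hST
    _ = 2 * D * ‖S - T‖ * ‖z‖ * ‖(S : E →ₗ[𝕜] F) x‖ := by rw [coe_coe]; ring

end ContinuousLinearMap

end NormedSpace

theorem isFredholm_of_semiFredholm_limit_of_fredholm
    (Tn : ℕ → (X →L[ℝ] Y)) (T : X →L[ℝ] Y)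
    (hTn : ∀ n, IsFredholm (Tn n))
    (hlim : Filter.Tendsto Tn Filter.atTop (nhds T))
    (hker : FiniteDimensional ℝ (LinearMap.ker (T : X →ₗ[ℝ] Y)))
    (hrange : IsClosed (LinearMap.range (T : X →ₗ[ℝ] Y) : Set Y)) :
    FiniteDimensional ℝ (Y ⧸ LinearMap.range (T : X →ₗ[ℝ] Y)) := by
  obtain ⟨X₀, hcompl, D, hD, hTX₀⟩ := T.exists_isCompl_ker_norm_le_mul hrange
  suffices FiniteDimensional ℝ
      (StrongDual.polarSubmodule ℝ (LinearMap.range (T : X →ₗ[ℝ] Y))) from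
    Submodule.finiteDimensional_quotient_of_polarSubmodule _
  refine Submodule.finiteDimensional_of_forall_exists_norm_sub_le _ fun δ hδ => ?_
  have hclose : Filter.Tendsto (fun n => 2 * D * ‖Tn n - T‖) Filter.atTop (nhds 0) := by
    simpa using (hlim.sub_const T).norm.const_mul (2 * D)
  obtain ⟨n, hn⟩ := (hclose.eventually (gt_mem_nhds (lt_min hδ one_pos))).exists
  have := (hTn n).2.2
  have := (Tn n : X →ₗ[ℝ] Y).finiteDimensional_quotient_map_of_isCompl hcompl
  refine ⟨_, StrongDual.finiteDimensional_polarSubmodule (X₀.map (Tn n : X →ₗ[ℝ] Y)), fun z hz => ?_⟩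
  obtain ⟨w, hw, hzw⟩ := ContinuousLinearMap.exists_mem_polarSubmodule_map_norm_sub_le hD hTX₀
    (hn.le.trans (min_le_right _ _)) hz
  exact ⟨w, hw, hzw.trans (by gcongr; exact hn.le.trans (min_le_left _ _))⟩
end

section
/- Let X and Y be Banach spaces and let T : X → Y be a Fredholm continuous linear map. Then there exists ε > 0 such that every continuous linear map S : X → Y with ‖S − T‖ < ε (operator norm) is Fredholm and has the same index as T, i.e., (dim ker S) − (dim Y/range(S)) = (dim ker T) − (dim Y/range(T)) as integers. -/
/-!
Choose a complement `F` of `range T`, finite dimensional, and a closed complement `X₀` of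
`ker T`. Then `(x, f) ↦ T x + f` is an isomorphism `X₀ × F ≃ Y`, and since the invertible
operators form an open set, the same holds for `(x, f) ↦ S x + f` whenever `S` is close to `T`.
For such an `S`, the kernel of `(x, f) ↦ S x + f` on all of `X × F` is a complement of `X₀ × F`,
so its dimension is the codimension of `X₀`; as `S` is this map composed with `x ↦ (x, 0)`,
additivity of the index gives `index S = codim X₀ - dim F`, independently of `S`. The range of
`S` is closed because `S` is bounded below on the finite-codimensional subspace `X₀`.
-/

variable {X Y : Type*} [NormedAddCommGroup X] [NormedSpace ℝ X] [CompleteSpace X]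
  [NormedAddCommGroup Y] [NormedSpace ℝ Y] [CompleteSpace Y]

/-- The index of an operator: `dim ker T − dim coker T`, as an integer. -/
noncomputable def fredholmIndex (T : X →L[ℝ] Y) : ℤ :=
  (Module.finrank ℝ (LinearMap.ker (T : X →ₗ[ℝ] Y)) : ℤ) - (Module.finrank ℝ (Y ⧸ LinearMap.range (T : X →ₗ[ℝ] Y)) : ℤ)

section LinearAlgebra

open Function Module Submodule

variable {R k V W M N P : Type*}

namespace LinearMap

section Ring

variable [Ring R] [AddCommGroup V] [Module R V] [AddCommGroup W] [Module R W]
  [AddCommGroup M] [Module R M] [AddCommGroup N] [Module R N] [AddCommGroup P] [Module R P]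

noncomputable def _root_.Submodule.quotientProdTopEquiv (p : Submodule R M) :
    ((M × P) ⧸ p.prod (⊤ : Submodule R P)) ≃ₗ[R] M ⧸ p :=
  quotEquivOfEq _ _ (by rw [ker_comp, ker_mkQ, comap_fst]) ≪≫ₗ
    (p.mkQ ∘ₗ fst R M P).quotKerEquivOfSurjective (p.mkQ_surjective.comp fst_surjective)

variable (R M P) in
noncomputable def quotientRangeInlEquiv : ((M × P) ⧸ range (inl R M P)) ≃ₗ[R] P :=
  quotEquivOfEq _ _ (range_inl R M P) ≪≫ₗ (snd R M P).quotKerEquivOfSurjective snd_surjective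

theorem isCompl_range_ker_of_bijective_comp {A : W →ₗ[R] N} {j : V →ₗ[R] W}
    (h : Bijective (A ∘ₗ j)) : IsCompl (range j) (ker A) := by
  constructor
  · rw [Submodule.disjoint_def]
    rintro _ ⟨v, rfl⟩ hv
    have hv0 : v = 0 := h.1 (by simpa using hv)
    rw [hv0, map_zero]
  · rw [codisjoint_iff, eq_top_iff]
    intro w _
    obtain ⟨v, hv⟩ := h.2 (A w)
    exact mem_sup.2 ⟨j v, mem_range_self j v, w - j v, by simp [← hv], add_sub_cancel _ _⟩

theorem bijective_coprod_comp_subtype {T : M →ₗ[R] N} {X₀ : Submodule R M} {F : Submodule R N}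
    (hX₀ : IsCompl (ker T) X₀) (hF : IsCompl (range T) F) :
    Bijective ((T ∘ₗ X₀.subtype).coprod F.subtype) := by
  have hrange : range (T ∘ₗ X₀.subtype) = range T := by
    rw [range_comp, range_subtype, range_eq_map]
    exact (map_mono le_top).antisymm ((T.map_le_map_iff).2 hX₀.symm.sup_eq_top.ge)
  refine ⟨?_, ?_⟩
  · rw [← ker_eq_bot, ker_coprod_of_disjoint_range _ _ (by simpa [hrange] using hF.disjoint),
      ker_comp, disjoint_iff_comap_eq_bot.1 hX₀.symm.disjoint, ker_subtype, prod_bot]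
  · rw [← range_eq_top, range_coprod, hrange, range_subtype, hF.sup_eq_top]

end Ring

section DivisionRing

variable [DivisionRing k] [AddCommGroup M] [Module k M] [AddCommGroup N] [Module k N]
  [AddCommGroup P] [Module k P]

theorem index_inl : (inl k M P).index = -finrank k P := by
  rw [index_of_injective inl_injective, (quotientRangeInlEquiv k M P).finrank_eq]

theorem index_eq_finrank_ker_coprod_sub [FiniteDimensional k P] {S : M →ₗ[k] N} {g : P →ₗ[k] N}
    [FiniteDimensional k (ker (S.coprod g))] (h : Surjective (S.coprod g)) :
    FiniteDimensional k (ker S) ∧ FiniteDimensional k (N ⧸ range S) ∧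
      S.index = finrank k (ker (S.coprod g)) - finrank k P := by
  have : FiniteDimensional k (ker (inl k M P)) := by rw [ker_inl]; infer_instance
  have : FiniteDimensional k ((M × P) ⧸ range (inl k M P)) :=
    .equiv (quotientRangeInlEquiv k M P).symm
  have : FiniteDimensional k (N ⧸ range (S.coprod g)) := by
    rw [range_eq_top.2 h]; infer_instance
  have hindex := index_comp (f := inl k M P) (S.coprod g)
  rw [coprod_inl, index_of_surjective h, index_inl] at hindex
  refine ⟨?_, ?_, by rw [hindex, sub_eq_add_neg]⟩
  · rw [← coprod_inl S g, ker_comp]; infer_instance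
  · rw [← coprod_inl S g, range_comp]; infer_instance

theorem index_eq_of_bijective_coprod [FiniteDimensional k P] {S : M →ₗ[k] N}
    {X₀ : Submodule k M} {g : P →ₗ[k] N} [FiniteDimensional k (M ⧸ X₀)]
    (h : Bijective ((S ∘ₗ X₀.subtype).coprod g)) :
    FiniteDimensional k (ker S) ∧ FiniteDimensional k (N ⧸ range S) ∧
      S.index = finrank k (M ⧸ X₀) - finrank k P := by
  set j := X₀.subtype.prodMap (LinearMap.id : P →ₗ[k] P)
  have hj : Bijective (S.coprod g ∘ₗ j) := by
    convert h using 1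
    ext
    simp [j]
  have hrange : range j = X₀.prod ⊤ := by simp [j, range_prodMap]
  have e : ker (S.coprod g) ≃ₗ[k] M ⧸ X₀ :=
    (quotientEquivOfIsCompl _ _ (isCompl_range_ker_of_bijective_comp hj)).symm ≪≫ₗ
      quotEquivOfEq _ _ hrange ≪≫ₗ X₀.quotientProdTopEquiv
  have : FiniteDimensional k (ker (S.coprod g)) := .equiv e.symm
  rw [← e.finrank_eq]
  exact index_eq_finrank_ker_coprod_sub (Surjective.of_comp (g := j) hj.2)

end DivisionRing

end LinearMap

end LinearAlgebra

section Banach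

open Function Topology

variable {𝕜 E G P : Type*} [NontriviallyNormedField 𝕜] [NormedAddCommGroup E] [NormedSpace 𝕜 E]
  [CompleteSpace E] [NormedAddCommGroup G] [NormedSpace 𝕜 G] [CompleteSpace G]
  [NormedAddCommGroup P] [NormedSpace 𝕜 P]

theorem ContinuousAt.eventually_bijective {B : Type*} [TopologicalSpace B] {Φ : B → E →L[𝕜] G}
    {t : B} (hΦ : ContinuousAt Φ t) (ht : Bijective (Φ t)) : ∀ᶠ s in 𝓝 t, Bijective (Φ s) := by
  let e := ContinuousLinearEquiv.ofBijective (Φ t) (LinearMap.ker_eq_bot.2 ht.1)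
    (LinearMap.range_eq_top.2 ht.2)
  filter_upwards [hΦ e.nhds] with s ⟨e', he'⟩
  rw [← he']
  exact e'.bijective

theorem ContinuousLinearMap.isClosed_range_of_bijective_coprod [CompleteSpace 𝕜] [CompleteSpace P]
    {S : E →L[𝕜] G} {X₀ : Submodule 𝕜 E} {g : P →L[𝕜] G} [FiniteDimensional 𝕜 (E ⧸ X₀)]
    (hX₀ : IsClosed (X₀ : Set E)) (h : Bijective ((S ∘L X₀.subtypeL).coprod g)) :
    IsClosed (LinearMap.range (S : E →ₗ[𝕜] G) : Set G) := by
  have := hX₀.completeSpace_coe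
  let e := ContinuousLinearEquiv.ofBijective _ (LinearMap.ker_eq_bot.2 h.1)
    (LinearMap.range_eq_top.2 h.2)
  apply LinearMap.isClosed_range_of_isClosed_map_of_finiteDimensional_quotient (s := X₀)
  have hleft : LeftInverse (Prod.fst ∘ e.symm) (S ∘ X₀.subtype) := fun x => by
    have hx : e (x, 0) = S x := by simp [e]
    simp [← hx]
  convert hleft.isClosed_range (by fun_prop) (by fun_prop) using 1
  ext
  simp

end Banach

theorem isFredholm_and_fredholmIndex_eq_of_bijective_coprod {P : Type*} [NormedAddCommGroup P]
    [NormedSpace ℝ P] [FiniteDimensional ℝ P] {S : X →L[ℝ] Y} {X₀ : Submodule ℝ X}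
    {g : P →L[ℝ] Y} [FiniteDimensional ℝ (X ⧸ X₀)] (hX₀ : IsClosed (X₀ : Set X))
    (h : Function.Bijective ((S ∘L X₀.subtypeL).coprod g)) :
    IsFredholm S ∧ fredholmIndex S = Module.finrank ℝ (X ⧸ X₀) - Module.finrank ℝ P := by
  have := FiniteDimensional.complete ℝ P
  obtain ⟨hker, hcoker, hindex⟩ :=
    LinearMap.index_eq_of_bijective_coprod (S := (S : X →ₗ[ℝ] Y)) (g := (g : P →ₗ[ℝ] Y)) h
  exact ⟨⟨hker, S.isClosed_range_of_bijective_coprod hX₀ h, hcoker⟩, hindex⟩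

theorem isFredholm_stable_index_locally_constant
    (T : X →L[ℝ] Y) (hT : IsFredholm T) :
    ∃ ε > (0 : ℝ), ∀ S : X →L[ℝ] Y, ‖S - T‖ < ε →
      IsFredholm S ∧ fredholmIndex S = fredholmIndex T := by
  obtain ⟨_, -, _⟩ := hT
  obtain ⟨F, hF⟩ := (LinearMap.range (T : X →ₗ[ℝ] Y)).exists_isCompl
  have : FiniteDimensional ℝ F := .equiv (Submodule.quotientEquivOfIsCompl _ _ hF)
  obtain ⟨X₀, hX₀, hcompl⟩ :=
    (Submodule.ClosedComplemented.of_finiteDimensional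
      (LinearMap.ker (T : X →ₗ[ℝ] Y))).exists_isClosed_isCompl
  have : FiniteDimensional ℝ (X ⧸ X₀) :=
    .equiv (Submodule.quotientEquivOfIsCompl _ _ hcompl.symm).symm
  have : CompleteSpace X₀ := hX₀.completeSpace_coe
  have hTbij : Function.Bijective ((T ∘L X₀.subtypeL).coprod F.subtypeL) :=
    LinearMap.bijective_coprod_comp_subtype hcompl hF
  have hnear : ∀ᶠ S in nhds T, Function.Bijective ((S ∘L X₀.subtypeL).coprod F.subtypeL) :=
    ContinuousAt.eventually_bijective (by fun_prop) hTbij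
  obtain ⟨-, hTindex⟩ := isFredholm_and_fredholmIndex_eq_of_bijective_coprod hX₀ hTbij
  obtain ⟨ε, hε, hball⟩ := Metric.eventually_nhds_iff.1 hnear
  refine ⟨ε, hε, fun S hS => ?_⟩
  obtain ⟨hSfred, hSindex⟩ :=
    isFredholm_and_fredholmIndex_eq_of_bijective_coprod hX₀ (hball (by rwa [dist_eq_norm]))
  exact ⟨hSfred, hSindex.trans hTindex.symm⟩
end

section
/- (Abstract Ehrling inequality) Let X, Y, Z be Banach spaces, let i : X → Y be a compact linear operator, and let j : Y → Z be an injective continuous linear map. Then for every ε > 0 there exists a constant C = C(ε) ≥ 0 such that for all x ∈ X, ‖i x‖_Y ≤ ε ‖x‖_X + C ‖j(i x)‖_Z. -/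
theorem abstract_ehrling_inequality
    {X Y Z : Type*} [NormedAddCommGroup X] [NormedSpace ℝ X] [CompleteSpace X]
    [NormedAddCommGroup Y] [NormedSpace ℝ Y] [CompleteSpace Y]
    [NormedAddCommGroup Z] [NormedSpace ℝ Z] [CompleteSpace Z]
    (i : X →L[ℝ] Y) (hi : IsCompactOperator i)
    (j : Y →L[ℝ] Z) (hj : Function.Injective j) :
    ∀ ε > (0 : ℝ), ∃ C ≥ (0 : ℝ), ∀ x : X, ‖i x‖ ≤ ε * ‖x‖ + C * ‖j (i x)‖ := by
  intro ε hε
  by_contra h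
  push_neg at h
  -- for each n : ℕ, pick xₙ with ‖i xₙ‖ > ε ‖xₙ‖ + n ‖j (i xₙ)‖
  have hsel : ∀ n : ℕ, ∃ x : X, ε * ‖x‖ + n * ‖j (i x)‖ < ‖i x‖ := fun n =>
    h n (Nat.cast_nonneg n)
  choose x hx using hsel
  have hxne : ∀ n, x n ≠ 0 := by
    intro n hn
    have := hx n
    simp [hn] at this
  set u : ℕ → X := fun n => ‖x n‖⁻¹ • x n with hu
  have hnu : ∀ n, ‖u n‖ = 1 := by
    intro n
    simp [hu, norm_smul, abs_of_nonneg (inv_nonneg.2 (norm_nonneg _)),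
      inv_mul_cancel₀ (norm_ne_zero_iff.2 (hxne n))]
  have hxu : ∀ n, ε + n * ‖j (i (u n))‖ < ‖i (u n)‖ := by
    intro n
    have hpos : (0 : ℝ) < ‖x n‖⁻¹ := inv_pos.2 (norm_pos_iff.2 (hxne n))
    have h1 : i (u n) = ‖x n‖⁻¹ • i (x n) := by simp [hu]
    rw [h1, map_smul, norm_smul, norm_smul, Real.norm_eq_abs, abs_of_pos hpos]
    have := hx n
    have hne : ‖x n‖ ≠ 0 := norm_ne_zero_iff.2 (hxne n)
    calc ε + n * (‖x n‖⁻¹ * ‖j (i (x n))‖)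
        = ‖x n‖⁻¹ * (ε * ‖x n‖ + n * ‖j (i (x n))‖) := by field_simp
      _ < ‖x n‖⁻¹ * ‖i (x n)‖ := by
          exact (mul_lt_mul_iff_right₀ hpos).2 (hx n)
  -- i (u n) lies in a compact set
  have hK : IsCompact (closure (i '' Metric.closedBall (0 : X) 1)) :=
    hi.isCompact_closure_image_closedBall (𝕜₁ := ℝ) 1
  have hmem : ∀ n, i (u n) ∈ closure (i '' Metric.closedBall (0 : X) 1) := by
    intro n
    exact subset_closure ⟨u n, by simp [Metric.mem_closedBall, hnu n], rfl⟩
  obtain ⟨y, -, φ, hφmono, hφlim⟩ := hK.tendsto_subseq hmem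
  -- j (i (u n)) → 0
  have hbound : ∀ n, ‖i (u n)‖ ≤ ‖i‖ := fun n => by
    simpa [hnu n] using i.le_opNorm (u n)
  have hjlim : Filter.Tendsto (fun n => j (i (u (φ n)))) Filter.atTop (nhds 0) := by
    have hsq : ∀ n : ℕ, 0 < n → ‖j (i (u (φ n)))‖ ≤ ‖i‖ / n := by
      intro n hn
      have hφn : (n : ℝ) ≤ (φ n : ℝ) := by exact_mod_cast hφmono.le_apply
      have h1 : (φ n : ℝ) * ‖j (i (u (φ n)))‖ ≤ ‖i‖ := by
        have := (hxu (φ n)).le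
        have h2 := hbound (φ n)
        nlinarith [norm_nonneg (j (i (u (φ n)))), hε]
      have hn' : (0 : ℝ) < n := by exact_mod_cast hn
      rw [le_div_iff₀ hn', mul_comm]
      calc (n : ℝ) * ‖j (i (u (φ n)))‖ ≤ (φ n : ℝ) * ‖j (i (u (φ n)))‖ := by
            exact mul_le_mul_of_nonneg_right hφn (norm_nonneg _)
        _ ≤ ‖i‖ := h1
    rw [tendsto_zero_iff_norm_tendsto_zero]
    apply squeeze_zero' (Filter.Eventually.of_forall fun n => norm_nonneg _)
      (Filter.eventually_atTop.2 ⟨1, fun n hn => hsq n hn⟩)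
    exact Filter.Tendsto.div_atTop tendsto_const_nhds tendsto_natCast_atTop_atTop
  -- j y = 0, so y = 0
  have hjy : j y = 0 := by
    have : Filter.Tendsto (fun n => j (i (u (φ n)))) Filter.atTop (nhds (j y)) :=
      (j.continuous.tendsto y).comp hφlim
    exact tendsto_nhds_unique this hjlim
  have hy0 : y = 0 := hj (by simpa using hjy)
  -- but ‖i (u (φ n))‖ > ε, so ‖y‖ ≥ ε > 0
  have hnormlim : Filter.Tendsto (fun n => ‖i (u (φ n))‖) Filter.atTop (nhds ‖y‖) :=
    (continuous_norm.tendsto y).comp hφlim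
  have hge : ε ≤ ‖y‖ := by
    apply le_of_tendsto_of_tendsto' tendsto_const_nhds hnormlim
    intro n
    have := hxu (φ n)
    nlinarith [norm_nonneg (j (i (u (φ n)))), Nat.cast_nonneg (φ n) (α := ℝ)]
  rw [hy0, norm_zero] at hge
  linarith
end
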